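/- The B_3 orbit function C_{(1,1,0)} as a polynomial in the fundamental orbit functions: For all x = (x₁,x₂,x₃) ∈ ℝ³, Σ_{i≠j} 4 cos(4πx_i) cos(2πx_j) (the sum over all six ordered pairs of distinct indices i, j ∈ {1,2,3}) equals u₁u₂ − 3u₃² + 6u₂ + 8u₁ + 24, where u₁ = 2(cos 2πx₁ + cos 2πx₂ + cos 2πx₃), u₂ = 4(cos 2πx₁ cos 2πx₂ + cos 2πx₁ cos 2πx₃ + cos 2πx₂ cos 2πx₃), and u₃ = 8 cos πx₁ cos πx₂ cos πx₃. -/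
import Mathlib

open Real

/-- The `B₃` orbit function `C_{(1,1,0)}` as a polynomial in the fundamental orbit
functions: `Σ_{i≠j} 4 cos 4πx_i cos 2πx_j = u₁u₂ − 3u₃² + 6u₂ + 8u₁ + 24`. -/
theorem B3_C110_polynomial (x₁ x₂ x₃ u₁ u₂ u₃ : ℝ)
    (hu₁ : u₁ = 2 * (cos (2 * π * x₁) + cos (2 * π * x₂) + cos (2 * π * x₃)))
    (hu₂ : u₂ = 4 * (cos (2 * π * x₁) * cos (2 * π * x₂) + cos (2 * π * x₁) * cos (2 * π * x₃)
      + cos (2 * π * x₂) * cos (2 * π * x₃)))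
    (hu₃ : u₃ = 8 * cos (π * x₁) * cos (π * x₂) * cos (π * x₃)) :
    4 * cos (4 * π * x₁) * cos (2 * π * x₂) + 4 * cos (4 * π * x₁) * cos (2 * π * x₃)
      + 4 * cos (4 * π * x₂) * cos (2 * π * x₁) + 4 * cos (4 * π * x₂) * cos (2 * π * x₃)
      + 4 * cos (4 * π * x₃) * cos (2 * π * x₁) + 4 * cos (4 * π * x₃) * cos (2 * π * x₂) =
      u₁ * u₂ - 3 * u₃ ^ 2 + 6 * u₂ + 8 * u₁ + 24 := by
  have h2 : ∀ x : ℝ, cos (2 * π * x) = 2 * cos (π * x) ^ 2 - 1 := by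
    intro x
    rw [show (2:ℝ) * π * x = 2 * (π * x) by ring, cos_two_mul]
  have h4 : ∀ x : ℝ, cos (4 * π * x) = 2 * cos (2 * π * x) ^ 2 - 1 := by
    intro x
    rw [show (4:ℝ) * π * x = 2 * (2 * π * x) by ring, cos_two_mul]
  rw [hu₃, h4 x₁, h4 x₂, h4 x₃] at *
  rw [hu₁, hu₂, h2 x₁, h2 x₂, h2 x₃]
  ring
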